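/- Let D be a digraph and γ a pre-end of D. Then γ includes an end of D if and only if γ is represented both by a directed ray and by a reverse directed ray; moreover, in that case γ includes exactly one end of D. -/

import Mathlib

variable {V : Type*}

/-- Reachability from `a` to `b` by a directed walk staying inside the vertex set `S`. -/
def ReachIn (D : V → V → Prop) (S : Set V) (a b : V) : Prop :=
  a ∈ S ∧ b ∈ S ∧ Relation.ReflTransGen (fun x y => y ∈ S ∧ D x y) a b

/-- `C` is a strong component of the subdigraph of `D` induced on `S`. -/
def IsSCCIn (D : V → V → Prop) (S : Set V) (C : Set V) : Prop :=
  ∃ a ∈ S, C = {b | ReachIn D S a b ∧ ReachIn D S b a}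

/-- A directed ray in `D`. -/
def IsRay (D : V → V → Prop) (R : ℕ → V) : Prop :=
  Function.Injective R ∧ ∀ n, D (R n) (R (n + 1))

/-- A reverse directed ray in `D`. -/
def IsRevRay (D : V → V → Prop) (R : ℕ → V) : Prop :=
  Function.Injective R ∧ ∀ n, D (R (n + 1)) (R n)

/-- The ray `R` has a tail inside the vertex set `C`. -/
def HasTailIn (R : ℕ → V) (C : Set V) : Prop :=
  ∃ n, ∀ m, n ≤ m → R m ∈ C

/-- A solid ray: for every finite `X` it has a tail in some strong component of `D − X`. -/
def Solid (D : V → V → Prop) (R : ℕ → V) : Prop :=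
  IsRay D R ∧ ∀ X : Finset V, ∃ C, IsSCCIn D ((↑X : Set V)ᶜ) C ∧ HasTailIn R C

/-- Two solid rays are end-equivalent: for every finite `X` they have tails in the same
strong component of `D − X`. -/
def EndEquiv (D : V → V → Prop) (R R' : ℕ → V) : Prop :=
  ∀ X : Finset V, ∃ C, IsSCCIn D ((↑X : Set V)ᶜ) C ∧ HasTailIn R C ∧ HasTailIn R' C

/-- `Ω` is an end of `D`: the class of solid rays equivalent to some solid ray. -/
def IsEnd (D : V → V → Prop) (Ω : Set (ℕ → V)) : Prop :=
  ∃ R, Solid D R ∧ Ω = {R' | Solid D R' ∧ EndEquiv D R R'}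

/-- A (nonempty) directed path, recorded as its list of vertices. -/
def IsPathList (D : V → V → Prop) (l : List V) : Prop :=
  l ≠ [] ∧ l.Nodup ∧ l.Chain' D

/-- Infinitely many pairwise disjoint `A`–`B` paths in `D` (each meeting `A` precisely in its
first vertex and `B` precisely in its last vertex). -/
def DisjointPathsFrom (D : V → V → Prop) (A B : Set V) : Prop :=
  ∃ P : ℕ → List V,
    (∀ k, IsPathList D (P k)) ∧
    (∀ j k, j ≠ k → ∀ x ∈ P j, x ∉ P k) ∧
    (∀ k, ∃ a, (P k).head? = some a ∧ a ∈ A) ∧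
    (∀ k, ∃ b, (P k).getLast? = some b ∧ b ∈ B) ∧
    (∀ k, ∀ x ∈ (P k).tail, x ∉ A) ∧
    (∀ k, ∀ x ∈ (P k).dropLast, x ∉ B)

/-- A necklace in `D`: an inflated symmetric ray with finite branch sets (beads), given by its
beads together with the connecting (subdividing) paths in both directions. -/
structure Necklace (D : V → V → Prop) where
  bead : ℕ → Set V
  fwd : ℕ → List V
  bwd : ℕ → List V
  bead_fin : ∀ n, (bead n).Finite
  bead_nonempty : ∀ n, (bead n).Nonempty
  bead_disj : ∀ m n, m ≠ n → Disjoint (bead m) (bead n)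
  bead_strong : ∀ n, ∀ a ∈ bead n, ∀ b ∈ bead n, ReachIn D (bead n) a b
  fwd_path : ∀ n, IsPathList D (fwd n)
  bwd_path : ∀ n, IsPathList D (bwd n)
  fwd_head : ∀ n a, (fwd n).head? = some a → a ∈ bead n
  fwd_last : ∀ n b, (fwd n).getLast? = some b → b ∈ bead (n + 1)
  bwd_head : ∀ n a, (bwd n).head? = some a → a ∈ bead (n + 1)
  bwd_last : ∀ n b, (bwd n).getLast? = some b → b ∈ bead n
  fwd_inner : ∀ n, ∀ x ∈ (fwd n).tail.dropLast, ∀ m, x ∉ bead m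
  bwd_inner : ∀ n, ∀ x ∈ (bwd n).tail.dropLast, ∀ m, x ∉ bead m
  fwd_fwd_disj : ∀ m n, m ≠ n → ∀ x ∈ (fwd m).tail.dropLast, x ∉ (fwd n).tail.dropLast
  bwd_bwd_disj : ∀ m n, m ≠ n → ∀ x ∈ (bwd m).tail.dropLast, x ∉ (bwd n).tail.dropLast
  fwd_bwd_disj : ∀ m n, ∀ x ∈ (fwd m).tail.dropLast, x ∉ (bwd n).tail.dropLast

/-- The vertex set of a necklace. -/
def Necklace.verts {D : V → V → Prop} (N : Necklace D) : Set V :=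
  (⋃ n, N.bead n) ∪ {x | ∃ n, x ∈ N.fwd n ∨ x ∈ N.bwd n}

/-- A necklace is attached to `𝒰` if infinitely many of its beads meet every set in `𝒰`. -/
def Necklace.AttachedTo {D : V → V → Prop} (N : Necklace D) (𝒰 : Finset (Set V)) : Prop :=
  {n | ∀ U ∈ 𝒰, (N.bead n ∩ U).Nonempty}.Infinite

/-- A necklace represents the end of the solid ray `R`: for every finite `X`, all but finitely
many beads lie in the strong component of `D − X` in which `R` has a tail. -/
def NecklaceRepresents {D : V → V → Prop} (N : Necklace D) (R : ℕ → V) : Prop :=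
  ∀ X : Finset V, ∃ C, IsSCCIn D ((↑X : Set V)ᶜ) C ∧ HasTailIn R C ∧
    ∃ n₀, ∀ n, n₀ ≤ n → N.bead n ⊆ C

/-- `URankLE D 𝒰 S α`: the subdigraph of `D` induced on `S` has `𝒰`-rank at most `α`. -/
inductive URankLE (D : V → V → Prop) (𝒰 : Finset (Set V)) : Set V → Ordinal → Prop
  | base (S : Set V) (α : Ordinal) (U : Set V) (hU : U ∈ 𝒰) (h : (U ∩ S).Finite) :
      URankLE D 𝒰 S α
  | step (S : Set V) (α : Ordinal) (X : Finset V) (r : Set V → Ordinal)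
      (hr : ∀ C, IsSCCIn D (S \ ↑X) C → r C < α)
      (h : ∀ C, IsSCCIn D (S \ ↑X) C → URankLE D 𝒰 C (r C)) :
      URankLE D 𝒰 S α

/-- `D` (induced on `S`) has `𝒰`-rank exactly `α`. -/
def HasURank (D : V → V → Prop) (𝒰 : Finset (Set V)) (S : Set V) (α : Ordinal) : Prop :=
  URankLE D 𝒰 S α ∧ ∀ β < α, ¬ URankLE D 𝒰 S β

/-- A vertex-direction of `D`. -/
def IsVertexDirection (D : V → V → Prop) (f : Finset V → Set V) : Prop :=
  (∀ X : Finset V, IsSCCIn D ((↑X : Set V)ᶜ) (f X)) ∧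
  ∀ X Y : Finset V, X ⊆ Y → f Y ⊆ f X

/-- A separation `(A,B)` of `D`: `A ∪ B = V(D)` and no edge from `B∖A` to `A∖B`. -/
def IsSep (D : V → V → Prop) (A B : Set V) : Prop :=
  A ∪ B = Set.univ ∧ ∀ a ∈ B \ A, ∀ b ∈ A \ B, ¬ D a b

/-- A finite order separation `(A,B)` points towards the vertex-direction `f`. -/
def PointsTowards (D : V → V → Prop) (f : Finset V → Set V) (A B : Set V)
    (h : (A ∩ B).Finite) : Prop :=
  f h.toFinset ⊆ B \ A

/-- A finite order separation `(A,B)` points away from the vertex-direction `f`. -/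
def PointsAway (D : V → V → Prop) (f : Finset V → Set V) (A B : Set V)
    (h : (A ∩ B).Finite) : Prop :=
  f h.toFinset ⊆ A \ B

/-- The vertex `v` dominates the vertex-direction `f`. -/
def DomDir (D : V → V → Prop) (v : V) (f : Finset V → Set V) : Prop :=
  ∀ A B, IsSep D A B → ∀ h : (A ∩ B).Finite, PointsAway D f A B h → v ∈ A

/-- An infinite `v`–`B` fan: infinitely many `v`–`B` paths meeting pairwise precisely in `v`. -/
def Fan (D : V → V → Prop) (v : V) (B : Set V) : Prop :=
  ∃ P : ℕ → List V,
    (∀ k, IsPathList D (P k)) ∧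
    (∀ k, (P k).head? = some v) ∧
    (∀ k, 2 ≤ (P k).length) ∧
    (∀ k, ∃ b, (P k).getLast? = some b ∧ b ∈ B) ∧
    (∀ k, ∀ x ∈ (P k).dropLast, x ∉ B) ∧
    (∀ j k, j ≠ k → ∀ x ∈ (P j).tail, x ∉ (P k).tail)

/-- Limit edge between the ends of the solid rays `R` and `R'`. -/
def LimitEdgeEE (D : V → V → Prop) (R R' : ℕ → V) : Prop :=
  ∀ (X : Finset V) C C', IsSCCIn D ((↑X : Set V)ᶜ) C → HasTailIn R C →
    IsSCCIn D ((↑X : Set V)ᶜ) C' → HasTailIn R' C' → C ≠ C' →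
    ∃ a ∈ C, ∃ b ∈ C', D a b

/-- Limit edge from the vertex `v` to the end of the solid ray `R`. -/
def LimitEdgeVE (D : V → V → Prop) (v : V) (R : ℕ → V) : Prop :=
  ∀ (X : Finset V) C, IsSCCIn D ((↑X : Set V)ᶜ) C → HasTailIn R C → v ∉ C →
    ∃ b ∈ C, D v b

/-- Limit edge from the end of the solid ray `R` to the vertex `v`. -/
def LimitEdgeEV (D : V → V → Prop) (R : ℕ → V) (v : V) : Prop :=
  ∀ (X : Finset V) C, IsSCCIn D ((↑X : Set V)ᶜ) C → HasTailIn R C → v ∉ C →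
    ∃ a ∈ C, D a v

/-- A subdivided infinite out-star in `D` with centre `c`, given by its paths. -/
def IsStar (D : V → V → Prop) (c : V) (P : ℕ → List V) : Prop :=
  (∀ k, IsPathList D (P k)) ∧ (∀ k, (P k).head? = some c) ∧
  (∀ k, 2 ≤ (P k).length) ∧
  (∀ j k, j ≠ k → ∀ x ∈ (P j).tail, x ∉ (P k).tail)

/-- A directed comb in `D` with spine `R`, given by its (pairwise disjoint) paths each meeting
`R` precisely in its first vertex. -/
def IsComb (D : V → V → Prop) (R : ℕ → V) (P : ℕ → List V) : Prop :=
  IsRay D R ∧ (∀ k, IsPathList D (P k)) ∧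
  (∀ k, ∃ n, (P k).head? = some (R n)) ∧
  (∀ k, ∀ x ∈ (P k).tail, ∀ n, x ≠ R n) ∧
  (∀ j k, j ≠ k → ∀ x ∈ P j, x ∉ P k)

/-- A star in `D` whose `k`-th leaf is `a k`. -/
def StarAttachedWith (D : V → V → Prop) (a : ℕ → V) : Prop :=
  ∃ c P, IsStar D c P ∧ ∀ k, (P k).getLast? = some (a k)

/-- A comb in `D` whose `k`-th tooth is `a k`. -/
def CombAttachedWith (D : V → V → Prop) (a : ℕ → V) : Prop :=
  ∃ R P, IsComb D R P ∧ ∀ k, (P k).getLast? = some (a k)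

/-- `a` and `b` are consecutive entries of the list `l`. -/
def AdjInList (l : List V) (a b : V) : Prop :=
  ∃ l₁ l₂, l = l₁ ++ a :: b :: l₂

/-- The edge relation of (a subdigraph of `D` forming) the necklace `N`: all `D`-edges inside a
bead together with the edges of the connecting paths. -/
def Necklace.edges {D : V → V → Prop} (N : Necklace D) (a b : V) : Prop :=
  D a b ∧ ((∃ n, a ∈ N.bead n ∧ b ∈ N.bead n) ∨
    (∃ n, AdjInList (N.fwd n) a b ∨ AdjInList (N.bwd n) a b))

/-- A generalized ray: a directed ray (`true`) or a reverse directed ray (`false`). -/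
def IsGenRay (D : V → V → Prop) : Bool × (ℕ → V) → Prop
  | (true, R) => IsRay D R
  | (false, R) => IsRevRay D R

/-- Pre-end equivalence of generalized rays: infinitely many disjoint paths in both
directions. -/
def PreEquiv (D : V → V → Prop) (Q Q' : Bool × (ℕ → V)) : Prop :=
  DisjointPathsFrom D (Set.range Q.2) (Set.range Q'.2) ∧
  DisjointPathsFrom D (Set.range Q'.2) (Set.range Q.2)

/-- The pre-end `γ` includes the end represented by the solid ray `R`. -/
def IncludesEnd (D : V → V → Prop) (γ : Set (Bool × (ℕ → V))) (R : ℕ → V) : Prop :=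
  Solid D R ∧ ∀ R', Solid D R' → EndEquiv D R R' → (true, R') ∈ γ

/-- The set of edges of `D` from `A` to `B`. -/
def EdgesBetween (D : V → V → Prop) (A B : Set V) : Set (V × V) :=
  {e | D e.1 e.2 ∧ e.1 ∈ A ∧ e.2 ∈ B}

/-- A bundle of `D − X`. -/
def IsBundle (D : V → V → Prop) (X : Finset V) (E : Set (V × V)) : Prop :=
  E.Nonempty ∧
  ((∃ C C', IsSCCIn D ((↑X : Set V)ᶜ) C ∧ IsSCCIn D ((↑X : Set V)ᶜ) C' ∧ C ≠ C' ∧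
      E = EdgesBetween D C C') ∨
   (∃ v ∈ X, ∃ C, IsSCCIn D ((↑X : Set V)ᶜ) C ∧
      (E = EdgesBetween D {v} C ∨ E = EdgesBetween D C {v})))

/-- Compatibility `f(X) ⊇ f(Y)` between values of a direction (a strong component is regarded
as containing a bundle if it contains all its edges). -/
def DirCompat : Set V ⊕ Set (V × V) → Set V ⊕ Set (V × V) → Prop
  | Sum.inl C, Sum.inl C' => C' ⊆ C
  | Sum.inl C, Sum.inr E' => ∀ e ∈ E', e.1 ∈ C ∧ e.2 ∈ C
  | Sum.inr _, Sum.inl _ => False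
  | Sum.inr E, Sum.inr E' => E' ⊆ E

/-- A direction of `D`: maps each finite `X` to a strong component or a bundle of `D − X`,
compatibly. -/
def IsDirection (D : V → V → Prop) (f : Finset V → Set V ⊕ Set (V × V)) : Prop :=
  (∀ X : Finset V, (∃ C, IsSCCIn D ((↑X : Set V)ᶜ) C ∧ f X = Sum.inl C) ∨
    (∃ E, IsBundle D X E ∧ f X = Sum.inr E)) ∧
  ∀ X Y : Finset V, X ⊆ Y → DirCompat (f X) (f Y)

/-- An edge-direction: a direction whose value is a bundle for some finite `X`. -/
def IsEdgeDirection (D : V → V → Prop) (f : Finset V → Set V ⊕ Set (V × V)) : Prop :=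
  IsDirection D f ∧ ∃ (X : Finset V) (E : Set (V × V)), f X = Sum.inr E

/-- The three kinds of (potential) limit edges: end–end, vertex–end, end–vertex.
Ends are given as sets of (solid) rays. -/
inductive LimitEdgeObj (V : Type*) where
  | ee (Ω₁ Ω₂ : Set (ℕ → V))
  | ve (v : V) (Ω : Set (ℕ → V))
  | ev (Ω : Set (ℕ → V)) (v : V)

/-- `l` is a limit edge of `D`. -/
def IsLimitEdge (D : V → V → Prop) : LimitEdgeObj V → Prop
  | LimitEdgeObj.ee Ω₁ Ω₂ => IsEnd D Ω₁ ∧ IsEnd D Ω₂ ∧ Ω₁ ≠ Ω₂ ∧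
      ∀ R ∈ Ω₁, ∀ R' ∈ Ω₂, LimitEdgeEE D R R'
  | LimitEdgeObj.ve v Ω => IsEnd D Ω ∧ ∀ R ∈ Ω, LimitEdgeVE D v R
  | LimitEdgeObj.ev Ω v => IsEnd D Ω ∧ ∀ R ∈ Ω, LimitEdgeEV D R v

/-- `f` agrees with the map `f_λ` for the end–end limit edge `Ω₁Ω₂`. -/
def AgreesEE (D : V → V → Prop) (Ω₁ Ω₂ : Set (ℕ → V))
    (f : Finset V → Set V ⊕ Set (V × V)) : Prop :=
  ∀ (X : Finset V), ∀ R ∈ Ω₁, ∀ R' ∈ Ω₂, ∀ C C',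
    IsSCCIn D ((↑X : Set V)ᶜ) C → HasTailIn R C →
    IsSCCIn D ((↑X : Set V)ᶜ) C' → HasTailIn R' C' →
    (C = C' → f X = Sum.inl C) ∧ (C ≠ C' → f X = Sum.inr (EdgesBetween D C C'))

/-- `f` agrees with the map `f_λ` for the vertex–end limit edge `vΩ`. -/
def AgreesVE (D : V → V → Prop) (v : V) (Ω : Set (ℕ → V))
    (f : Finset V → Set V ⊕ Set (V × V)) : Prop :=
  ∀ (X : Finset V), ∀ R ∈ Ω, ∀ C, IsSCCIn D ((↑X : Set V)ᶜ) C → HasTailIn R C →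
    (v ∈ C → f X = Sum.inl C) ∧
    (v ∈ (↑X : Set V) → f X = Sum.inr (EdgesBetween D {v} C)) ∧
    (∀ C', IsSCCIn D ((↑X : Set V)ᶜ) C' → v ∈ C' → C' ≠ C →
      f X = Sum.inr (EdgesBetween D C' C))

/-- `f` agrees with the map `f_λ` for the end–vertex limit edge `Ωv`. -/
def AgreesEV (D : V → V → Prop) (Ω : Set (ℕ → V)) (v : V)
    (f : Finset V → Set V ⊕ Set (V × V)) : Prop :=
  ∀ (X : Finset V), ∀ R ∈ Ω, ∀ C, IsSCCIn D ((↑X : Set V)ᶜ) C → HasTailIn R C →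
    (v ∈ C → f X = Sum.inl C) ∧
    (v ∈ (↑X : Set V) → f X = Sum.inr (EdgesBetween D C {v})) ∧
    (∀ C', IsSCCIn D ((↑X : Set V)ᶜ) C' → v ∈ C' → C' ≠ C →
      f X = Sum.inr (EdgesBetween D C C'))

/-- `f` agrees with `f_λ` for the limit edge `l`. -/
def Agrees (D : V → V → Prop) : LimitEdgeObj V → (Finset V → Set V ⊕ Set (V × V)) → Prop
  | LimitEdgeObj.ee Ω₁ Ω₂, f => AgreesEE D Ω₁ Ω₂ f
  | LimitEdgeObj.ve v Ω, f => AgreesVE D v Ω f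
  | LimitEdgeObj.ev Ω v, f => AgreesEV D Ω v f

/-!
Pre-equivalence is the same as "no finite vertex set separates the two rays, in either
direction" (disjoint paths can then be chosen greedily), and in that form it is transitive
through any ray or reverse ray.

If a ray `R` and a reverse ray `R'` are pre-equivalent, then for finite `X` every late vertex of
`R` gets back to a fixed late vertex of `R` in `D − X`: forward along `R`, across to a late
vertex of `R'`, down `R'`, and across to `R` again; so `R` is solid, and end-equivalent solid
rays are pre-equivalent to it. Conversely, if `R` is solid, its tail lies in one strong
component of `D − U` for every finite `U`, which yields walks `ψ k` from `R (c (k + 1))` back to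
`R (c k)` avoiding `ψ 0, …, ψ (k - 2)`. Concatenated, they form an infinite backward walk that
visits each vertex finitely often; keeping only the last visit of each vertex gives a reverse
ray, and the walks `ψ k` link it to `R` in both directions. Finally, two pre-equivalent solid
rays have their tails in strong components of `D − X` joined by paths both ways, i.e. in the
same one.
-/

open Filter Set

section Reach

variable {D : V → V → Prop} {S T : Set V} {a b c z : V}

theorem ReachIn.refl (h : a ∈ S) : ReachIn D S a a := ⟨h, h, .refl⟩

theorem ReachIn.single (ha : a ∈ S) (hb : b ∈ S) (h : D a b) : ReachIn D S a b :=
  ⟨ha, hb, .single ⟨hb, h⟩⟩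

theorem ReachIn.trans (h₁ : ReachIn D S a b) (h₂ : ReachIn D S b c) : ReachIn D S a c :=
  ⟨h₁.1, h₂.2.1, h₁.2.2.trans h₂.2.2⟩

theorem ReachIn.mono (hST : S ⊆ T) (h : ReachIn D S a b) : ReachIn D T a b :=
  ⟨hST h.1, hST h.2.1, Relation.ReflTransGen.mono (fun _ _ hxy => ⟨hST hxy.1, hxy.2⟩) _ _ h.2.2⟩

theorem reachIn_of_isChain {l : List V} (hl : l.IsChain D) (hS : ∀ x ∈ l, x ∈ S)
    (ha : l.head? = some a) (hb : l.getLast? = some b) : ReachIn D S a b := by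
  obtain _ | ⟨a', t⟩ := l
  · simp at ha
  obtain rfl : a = a' := by simpa using ha.symm
  refine ⟨hS a List.mem_cons_self, hS b (List.mem_of_mem_getLast? hb), ?_⟩
  refine List.relationReflTransGen_of_exists_isChain_cons t
    (hl.imp_of_mem_tail_imp fun _ y _ hy hxy => ⟨hS y (List.mem_of_mem_tail hy), hxy⟩) ?_
  simpa [List.getLast?_eq_some_getLast] using hb

theorem reachIn_of_isChain_of_mem {l : List V} (hl : l.IsChain D) (hS : ∀ x ∈ l, x ∈ S)
    (ha : l.head? = some a) (hb : l.getLast? = some b) (hz : z ∈ l) :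
    ReachIn D S a z ∧ ReachIn D S z b := by
  obtain ⟨l₁, l₂, rfl⟩ := List.append_of_mem hz
  have hpre : l₁ ++ [z] <+: l₁ ++ z :: l₂ := ⟨l₂, by simp⟩
  have hsuf : z :: l₂ <:+ l₁ ++ z :: l₂ := ⟨l₁, rfl⟩
  constructor
  · refine reachIn_of_isChain (hl.prefix hpre) (fun x hx => hS x (hpre.subset hx)) ?_ (by simp)
    cases l₁ <;> simpa using ha
  · refine reachIn_of_isChain (hl.suffix hsuf) (fun x hx => hS x (hsuf.subset hx)) rfl ?_
    rwa [List.getLast?_append_of_ne_nil _ (List.cons_ne_nil _ _)] at hb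

theorem ReachIn.exists_isPathList (h : ReachIn D S a b) :
    ∃ l, IsPathList D l ∧ l.head? = some a ∧ l.getLast? = some b ∧ ∀ x ∈ l, x ∈ S := by
  obtain ⟨ha, hb, h⟩ := h
  induction h using Relation.ReflTransGen.head_induction_on with
  | refl => exact ⟨[b], ⟨by simp, by simp, .singleton _⟩, rfl, rfl, by simpa using hb⟩
  | @head a c hac _ ih =>
    obtain ⟨l, ⟨hne, hnd, hch⟩, hhead, hlast, hS⟩ := ih hac.1
    by_cases hal : a ∈ l
    · obtain ⟨l₁, l₂, rfl⟩ := List.append_of_mem hal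
      refine ⟨a :: l₂, ⟨List.cons_ne_nil _ _, hnd.sublist (List.sublist_append_right _ _),
        hch.suffix ⟨l₁, rfl⟩⟩, rfl, ?_, fun x hx => hS x (List.mem_append_right _ hx)⟩
      rwa [List.getLast?_append_of_ne_nil _ (List.cons_ne_nil _ _)] at hlast
    · obtain _ | ⟨c', t⟩ := l
      · simp at hhead
      obtain rfl : c = c' := by simpa using hhead.symm
      refine ⟨a :: c :: t, ⟨List.cons_ne_nil _ _, List.nodup_cons.2 ⟨hal, hnd⟩,
        hch.cons_cons hac.2⟩, rfl, by simpa using hlast, ?_⟩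
      rintro x (_ | ⟨_, hx⟩)
      exacts [ha, hS x hx]

end Reach

section StrongComponents

variable {D : V → V → Prop} {S C C' : Set V} {u v : V}

theorem IsSCCIn.reachIn (hC : IsSCCIn D S C) (hu : u ∈ C) (hv : v ∈ C) : ReachIn D S u v := by
  obtain ⟨_, _, rfl⟩ := hC
  exact hu.2.trans hv.1

theorem IsSCCIn.mem_of_reachIn (hC : IsSCCIn D S C) (hv : v ∈ C) (h₁ : ReachIn D S v u)
    (h₂ : ReachIn D S u v) : u ∈ C := by
  obtain ⟨_, _, rfl⟩ := hC
  exact ⟨hv.1.trans h₁, h₂.trans hv.2⟩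

theorem IsSCCIn.subset_of_mem (hC : IsSCCIn D S C) (hC' : IsSCCIn D S C') (hv : v ∈ C)
    (hv' : v ∈ C') : C' ⊆ C :=
  fun _ hu => hC.mem_of_reachIn hv (hC'.reachIn hv' hu) (hC'.reachIn hu hv')

end StrongComponents

section Rays

variable {D : V → V → Prop} {R : ℕ → V}

theorem Function.Injective.exists_forall_ge_notMem {R : ℕ → V} (hR : R.Injective)
    (X : Finset V) : ∃ n₀, ∀ n, n₀ ≤ n → R n ∈ (↑X : Set V)ᶜ := by
  have := hR.tendsto_cofinite.eventually X.finite_toSet.eventually_cofinite_notMem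
  rwa [Nat.cofinite_eq_atTop, eventually_atTop] at this

theorem IsRay.exists_reachIn (hR : IsRay D R) (X : Finset V) :
    ∃ n₀, ∀ i j, n₀ ≤ i → i ≤ j → ReachIn D (↑X)ᶜ (R i) (R j) := by
  obtain ⟨n₀, hn₀⟩ := hR.1.exists_forall_ge_notMem X
  refine ⟨n₀, fun i j hi hij => ?_⟩
  induction j, hij using Nat.le_induction with
  | base => exact .refl (hn₀ i hi)
  | succ j hij ih =>
    exact ih.trans (.single (hn₀ j (by omega)) (hn₀ (j + 1) (by omega)) (hR.2 j))

theorem IsRevRay.exists_reachIn (hR : IsRevRay D R) (X : Finset V) :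
    ∃ n₀, ∀ i j, n₀ ≤ i → i ≤ j → ReachIn D (↑X)ᶜ (R j) (R i) := by
  obtain ⟨n₀, hn₀⟩ := hR.1.exists_forall_ge_notMem X
  refine ⟨n₀, fun i j hi hij => ?_⟩
  induction j, hij using Nat.le_induction with
  | base => exact .refl (hn₀ i hi)
  | succ j hij ih =>
    exact (ReachIn.single (hn₀ (j + 1) (by omega)) (hn₀ j (by omega)) (hR.2 j)).trans ih

end Rays

section Separators

variable {α : Type*}

theorem List.exists_eq_append_cons_first {p : α → Prop} :
    ∀ {l : List α}, (∃ x ∈ l, p x) → ∃ l₁ x l₂, l = l₁ ++ x :: l₂ ∧ p x ∧ ∀ y ∈ l₁, ¬ p y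
  | [], ⟨_, hx, _⟩ => absurd hx List.not_mem_nil
  | z :: t, h => by
    by_cases hz : p z
    · exact ⟨[], z, t, rfl, hz, by simp⟩
    · obtain ⟨l₁, x, l₂, rfl, hx, h₁⟩ :=
        List.exists_eq_append_cons_first (l := t) (by simpa [hz] using h)
      exact ⟨z :: l₁, x, l₂, rfl, hx, by simpa [hz] using h₁⟩

theorem List.exists_eq_append_cons_last {p : α → Prop} {l : List α} (h : ∃ x ∈ l, p x) :
    ∃ l₁ x l₂, l = l₁ ++ x :: l₂ ∧ p x ∧ ∀ y ∈ l₂, ¬ p y := by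
  obtain ⟨l₁, x, l₂, hl, hx, h₁⟩ :=
    List.exists_eq_append_cons_first (l := l.reverse) (by simpa using h)
  exact ⟨l₂.reverse, x, l₁.reverse, by simpa using congrArg List.reverse hl, hx,
    by simpa using h₁⟩

variable {D : V → V → Prop} {A B : Set V}

def IsPathFromTo (D : V → V → Prop) (A B : Set V) (l : List V) : Prop :=
  IsPathList D l ∧ (∃ a, l.head? = some a ∧ a ∈ A) ∧ (∃ b, l.getLast? = some b ∧ b ∈ B) ∧
    (∀ x ∈ l.tail, x ∉ A) ∧ (∀ x ∈ l.dropLast, x ∉ B)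

theorem IsPathList.exists_isPathFromTo {l : List V} (hl : IsPathList D l)
    (ha : ∃ a ∈ A, l.head? = some a) (hb : ∃ b ∈ B, l.getLast? = some b) :
    ∃ l', IsPathFromTo D A B l' ∧ l' <:+: l := by
  obtain ⟨a, ha, hla⟩ := ha
  obtain ⟨b, hb, hlb⟩ := hb
  obtain ⟨l₁, a', l₂, rfl, ha', hl₂⟩ :=
    List.exists_eq_append_cons_last ⟨a, List.mem_of_mem_head? hla, ha⟩
  rw [List.getLast?_append_of_ne_nil _ (List.cons_ne_nil _ _)] at hlb
  obtain ⟨m₁, b', m₂, hm, hb', hm₁⟩ :=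
    List.exists_eq_append_cons_first ⟨b, List.mem_of_mem_getLast? hlb, hb⟩
  have hpre : m₁ ++ [b'] <+: a' :: l₂ := ⟨m₂, by simp [hm]⟩
  have hinfix : m₁ ++ [b'] <:+: l₁ ++ a' :: l₂ :=
    hpre.isInfix.trans (List.IsSuffix.isInfix ⟨l₁, rfl⟩)
  refine ⟨m₁ ++ [b'], ⟨⟨by simp, hl.2.1.sublist hinfix.sublist, hl.2.2.infix hinfix⟩,
    ⟨a', ?_, ha'⟩, ⟨b', by simp, hb'⟩, fun x hx => hl₂ x (hpre.sublist.tail.subset hx),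
    by simpa using hm₁⟩, hinfix⟩
  cases m₁ <;> simp_all

def NoFiniteSeparator (D : V → V → Prop) (A B : Set V) : Prop :=
  ∀ X : Finset V, ∃ a ∈ A, ∃ b ∈ B, ReachIn D (↑X)ᶜ a b

theorem DisjointPathsFrom.noFiniteSeparator (h : DisjointPathsFrom D A B) :
    NoFiniteSeparator D A B := by
  obtain ⟨P, hP, hdisj, hhead, hlast, -, -⟩ := h
  intro X
  have hfin : {k | ∃ x ∈ X, x ∈ P k}.Finite := by
    refine (X.finite_toSet.biUnion fun x _ => ?_).subset
      fun k ⟨x, hx, hxk⟩ => Set.mem_biUnion (Finset.mem_coe.2 hx) hxk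
    exact Set.Subsingleton.finite fun j hj k hk => by_contra fun hjk => hdisj j k hjk x hj hk
  obtain ⟨k, hk⟩ := hfin.infinite_compl.nonempty
  obtain ⟨a, ha, haA⟩ := hhead k
  obtain ⟨b, hb, hbB⟩ := hlast k
  exact ⟨a, haA, b, hbB, reachIn_of_isChain (hP k).2.2 (fun x hx hxX => hk ⟨x, hxX, hx⟩) ha hb⟩

theorem NoFiniteSeparator.disjointPathsFrom (h : NoFiniteSeparator D A B) :
    DisjointPathsFrom D A B := by
  classical
  obtain ⟨P, hP, hdisj⟩ := exists_seq_of_forall_finset_exists (IsPathFromTo D A B)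
    (fun l l' => ∀ x ∈ l, x ∉ l') fun s _ => by
      obtain ⟨a, ha, b, hb, hab⟩ := h (s.biUnion List.toFinset)
      obtain ⟨l, hl, hhead, hlast, hS⟩ := hab.exists_isPathList
      obtain ⟨l', hl', hsub⟩ := hl.exists_isPathFromTo ⟨a, ha, hhead⟩ ⟨b, hb, hlast⟩
      exact ⟨l', hl', fun l₀ hl₀ x hx hx' =>
        hS x (hsub.subset hx') (Finset.mem_biUnion.2 ⟨l₀, hl₀, List.mem_toFinset.2 hx⟩)⟩
  refine ⟨P, fun k => (hP k).1, fun j k hjk x hj hk => ?_, fun k => (hP k).2.1,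
    fun k => (hP k).2.2.1, fun k => (hP k).2.2.2.1, fun k => (hP k).2.2.2.2⟩
  rcases hjk.lt_or_gt with h | h
  exacts [hdisj j k h x hj hk, hdisj k j h x hk hj]

theorem disjointPathsFrom_iff_noFiniteSeparator :
    DisjointPathsFrom D A B ↔ NoFiniteSeparator D A B :=
  ⟨DisjointPathsFrom.noFiniteSeparator, NoFiniteSeparator.disjointPathsFrom⟩

variable {f g Q : ℕ → V}

theorem NoFiniteSeparator.exists_reachIn_ge (h : NoFiniteSeparator D (range f) (range g))
    (X : Finset V) (N M : ℕ) : ∃ i j, N ≤ i ∧ M ≤ j ∧ ReachIn D (↑X)ᶜ (f i) (g j) := by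
  classical
  obtain ⟨_, ⟨i, rfl⟩, _, ⟨j, rfl⟩, hij⟩ :=
    h (X ∪ (Finset.range N).image f ∪ (Finset.range M).image g)
  have hi := hij.1
  have hj := hij.2.1
  simp only [Finset.coe_union, Finset.coe_image, Finset.coe_range, mem_compl_iff, mem_union,
    mem_image, mem_Iio, not_or, not_exists, not_and] at hi hj
  exact ⟨i, j, not_lt.1 fun hlt => hi.1.2 i hlt rfl, not_lt.1 fun hlt => hj.2 j hlt rfl,
    hij.mono (compl_subset_compl.2 fun x hx => by simp [hx])⟩

theorem NoFiniteSeparator.trans_isRay (hQ : IsRay D Q)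
    (h₁ : NoFiniteSeparator D (range f) (range Q)) (h₂ : NoFiniteSeparator D (range Q) (range g)) :
    NoFiniteSeparator D (range f) (range g) := fun X => by
  obtain ⟨n₀, hn₀⟩ := hQ.exists_reachIn X
  obtain ⟨i, s, -, hs, h₁⟩ := h₁.exists_reachIn_ge X 0 n₀
  obtain ⟨t, j, hst, -, h₂⟩ := h₂.exists_reachIn_ge X s 0
  exact ⟨f i, ⟨i, rfl⟩, g j, ⟨j, rfl⟩, h₁.trans ((hn₀ s t hs hst).trans h₂)⟩

theorem NoFiniteSeparator.trans_isRevRay (hQ : IsRevRay D Q)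
    (h₁ : NoFiniteSeparator D (range f) (range Q)) (h₂ : NoFiniteSeparator D (range Q) (range g)) :
    NoFiniteSeparator D (range f) (range g) := fun X => by
  obtain ⟨n₀, hn₀⟩ := hQ.exists_reachIn X
  obtain ⟨t, j, ht, -, h₂⟩ := h₂.exists_reachIn_ge X n₀ 0
  obtain ⟨i, s, -, hts, h₁⟩ := h₁.exists_reachIn_ge X 0 t
  exact ⟨f i, ⟨i, rfl⟩, g j, ⟨j, rfl⟩, h₁.trans ((hn₀ t s ht hts).trans h₂)⟩

end Separators

section PreEnds

variable {D : V → V → Prop} {R R' : ℕ → V} {Q Q' Q'' : Bool × (ℕ → V)}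

theorem NoFiniteSeparator.trans_isGenRay {f g : ℕ → V} (hQ : IsGenRay D Q)
    (h₁ : NoFiniteSeparator D (range f) (range Q.2))
    (h₂ : NoFiniteSeparator D (range Q.2) (range g)) : NoFiniteSeparator D (range f) (range g) := by
  obtain ⟨_ | _, Q⟩ := Q
  exacts [h₁.trans_isRevRay hQ h₂, h₁.trans_isRay hQ h₂]

theorem preEquiv_iff : PreEquiv D Q Q' ↔ NoFiniteSeparator D (range Q.2) (range Q'.2) ∧
    NoFiniteSeparator D (range Q'.2) (range Q.2) := by
  simp only [PreEquiv, disjointPathsFrom_iff_noFiniteSeparator]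

theorem PreEquiv.symm (h : PreEquiv D Q Q') : PreEquiv D Q' Q := And.symm h

theorem PreEquiv.trans (h₁ : PreEquiv D Q Q') (hQ' : IsGenRay D Q') (h₂ : PreEquiv D Q' Q'') :
    PreEquiv D Q Q'' := by
  rw [preEquiv_iff] at *
  exact ⟨h₁.1.trans_isGenRay hQ' h₂.1, h₂.2.trans_isGenRay hQ' h₁.2⟩

theorem IsRay.solid_of_preEquiv (hR : IsRay D R) (hR' : IsRevRay D R')
    (h : PreEquiv D (true, R) (false, R')) : Solid D R := by
  obtain ⟨h, h'⟩ := preEquiv_iff.1 h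
  refine ⟨hR, fun X => ?_⟩
  obtain ⟨n, hn⟩ := hR.exists_reachIn X
  obtain ⟨n', hn'⟩ := hR'.exists_reachIn X
  obtain ⟨u, w, hu, hw, hback⟩ := h'.exists_reachIn_ge X n' n
  refine ⟨_, ⟨R w, (hn w w hw le_rfl).1, rfl⟩, w, fun m hm => ⟨hn w m hw hm, ?_⟩⟩
  obtain ⟨s, t, hs, ht, hcross⟩ := h.exists_reachIn_ge X m u
  exact (hn m s (hw.trans hm) hs).trans (hcross.trans ((hn' u t hu ht).trans hback))

theorem EndEquiv.symm (h : EndEquiv D R R') : EndEquiv D R' R := fun X => by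
  obtain ⟨C, hC, h₁, h₂⟩ := h X
  exact ⟨C, hC, h₂, h₁⟩

theorem EndEquiv.noFiniteSeparator (h : EndEquiv D R R') :
    NoFiniteSeparator D (range R) (range R') := fun X => by
  obtain ⟨C, hC, ⟨n, hn⟩, ⟨n', hn'⟩⟩ := h X
  exact ⟨R n, ⟨n, rfl⟩, R' n', ⟨n', rfl⟩, hC.reachIn (hn n le_rfl) (hn' n' le_rfl)⟩

theorem EndEquiv.preEquiv (h : EndEquiv D R R') : PreEquiv D (true, R) (true, R') :=
  preEquiv_iff.2 ⟨h.noFiniteSeparator, h.symm.noFiniteSeparator⟩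

theorem Solid.endEquiv_refl (hR : Solid D R) : EndEquiv D R R := fun X => by
  obtain ⟨C, hC, hT⟩ := hR.2 X
  exact ⟨C, hC, hT, hT⟩

theorem Solid.endEquiv_of_preEquiv (hR : Solid D R) (hR' : Solid D R')
    (h : PreEquiv D (true, R) (true, R')) : EndEquiv D R R' := by
  obtain ⟨h, h'⟩ := preEquiv_iff.1 h
  intro X
  obtain ⟨C, hC, n, hn⟩ := hR.2 X
  obtain ⟨C', hC', n', hn'⟩ := hR'.2 X
  obtain ⟨i, j, hi, hj, hij⟩ := h.exists_reachIn_ge X n n'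
  obtain ⟨j', i', hj', hi', hji⟩ := h'.exists_reachIn_ge X n' n
  have hjC : R' j ∈ C := hC.mem_of_reachIn (hn i hi) hij
    ((hC'.reachIn (hn' j hj) (hn' j' hj')).trans (hji.trans (hC.reachIn (hn i' hi') (hn i hi))))
  exact ⟨C, hC, ⟨n, hn⟩, n', fun m hm => hC.subset_of_mem hC' hjC (hn' j hj) (hn' m hm)⟩

end PreEnds

section ReverseRay

theorem exists_strictMono_isRay_comp {r : V → V → Prop} {w : ℕ → V}
    (hw : ∀ n, w n ≠ w (n + 1) → r (w n) (w (n + 1))) (hfin : ∀ v, {n | w n = v}.Finite) :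
    ∃ m : ℕ → ℕ, StrictMono m ∧ IsRay r (w ∘ m) := by
  set last : ℕ → ℕ := fun n => sSup {k | w k = w n}
  have hle : ∀ {k n}, w k = w n → k ≤ last n := fun h => le_csSup (hfin _).bddAbove h
  have hw_last : ∀ n, w (last n) = w n := fun n =>
    Nat.sSup_mem (s := {k | w k = w n}) ⟨n, rfl⟩ (hfin _).bddAbove
  have hlast_last : ∀ n, last (last n) = last n := fun n => by
    simp only [last, hw_last]
  -- `m (k + 1)` is the last visit of the vertex that follows the last visit `m k`
  let m : ℕ → ℕ := fun k => Nat.rec (last 0) (fun _ p => last (p + 1)) k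
  have hm_last : ∀ k, last (m k) = m k := by
    rintro (_ | k) <;> exact hlast_last _
  have hm : StrictMono m := strictMono_nat_of_lt_succ fun k => hle (k := m k + 1) rfl
  refine ⟨m, hm, fun i j hij => hm.injective ?_, fun k => ?_⟩
  · exact le_antisymm (hm_last j ▸ hle hij) (hm_last i ▸ hle hij.symm)
  · have hne : w (m k) ≠ w (m k + 1) := fun h => by
      have := hle h.symm
      rw [hm_last] at this
      omega
    simpa [m, hw_last] using hw (m k) hne

theorem exists_walk_of_blocks {r : V → V → Prop} (β : ℕ → List V) (hne : ∀ k, β k ≠ [])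
    (hβ : ∀ k, (β k).IsChain r) (hlink : ∀ k, (β k).getLast? = (β (k + 1)).head?) :
    ∃ (w : ℕ → V) (b : ℕ → ℕ), (∀ n, w n ≠ w (n + 1) → r (w n) (w (n + 1))) ∧
      Tendsto b atTop atTop ∧ ∀ n, w n ∈ β (b n) := by
  set F : ℕ → List V := fun K => (List.range K).flatMap β
  have hF : ∀ K, F (K + 1) = F K ++ β K := fun K => by simp [F, List.range_succ]
  have hF_len : ∀ K, K ≤ (F K).length := by
    intro K
    induction K with
    | zero => simp
    | succ K ih => rw [hF, List.length_append]; have := List.length_pos_iff.2 (hne K); omega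
  have hF_prefix : ∀ {K K'}, K ≤ K' → F K <+: F K' := by
    intro K K' h
    induction K', h using Nat.le_induction with
    | base => exact List.prefix_refl _
    | succ K' _ ih => exact ih.trans ⟨β K', (hF K').symm⟩
  have hF_chain : ∀ K, (F K).IsChain (fun x y => x = y ∨ r x y) := by
    intro K
    induction K with
    | zero => simp [F]
    | succ K ih =>
      rw [hF]
      refine ih.append ((hβ K).imp fun _ _ => Or.inr) fun x hx y hy => Or.inl ?_
      cases K with
      | zero => simp [F] at hx
      | succ K =>
        rw [hF, List.getLast?_append_of_ne_nil _ (hne K), hlink] at hx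
        exact Option.mem_unique hx hy
  obtain ⟨d⟩ : Nonempty V := ⟨(β 0).head (hne 0)⟩
  have hblock : ∀ K n, n < (F K).length → ∃ k, (F K).getD n d ∈ β k ∧ n < (F (k + 1)).length := by
    intro K
    induction K with
    | zero => simp [F]
    | succ K ih =>
      intro n hn
      rw [hF] at hn ⊢
      by_cases h : n < (F K).length
      · rw [List.getD_append _ _ _ _ h]
        exact ih n h
      · rw [List.length_append] at hn
        refine ⟨K, ?_, by rw [hF, List.length_append]; exact hn⟩
        rw [List.getD_append_right _ _ _ _ (by omega), List.getD_eq_getElem _ _ (by omega)]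
        exact List.getElem_mem _
  have hw : ∀ {n K}, n < (F K).length → (F (n + 1)).getD n d = (F K).getD n d := by
    intro n K hn
    rcases le_total (n + 1) K with h | h <;> obtain ⟨t, ht⟩ := hF_prefix h
    · rw [← ht, List.getD_append _ _ _ _ (hF_len (n + 1))]
    · rw [← ht, List.getD_append _ _ _ _ hn]
  choose b hb using fun n => hblock (n + 1) n (hF_len (n + 1))
  refine ⟨fun n => (F (n + 1)).getD n d, b, fun n hne' => ?_,
    tendsto_atTop_atTop.2 fun K => ⟨(F K).length, fun n hn => ?_⟩, fun n => (hb n).1⟩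
  · have h2 := hF_len (n + 2)
    have e₁ : (F (n + 1)).getD n d = (F (n + 2))[n] := by
      rw [hw (K := n + 2) (by omega), List.getD_eq_getElem _ _ (by omega)]
    have e₂ : (F (n + 1 + 1)).getD (n + 1) d = (F (n + 2))[n + 1] :=
      List.getD_eq_getElem _ _ _
    beta_reduce at hne' ⊢
    rw [e₁, e₂] at hne' ⊢
    exact ((List.isChain_iff_getElem.1 (hF_chain (n + 2))) n (by omega)).resolve_left hne'
  · by_contra! h
    have := (hF_prefix (show b n + 1 ≤ K by omega)).length_le
    have := (hb n).2
    omega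

theorem exists_isRay_of_blocks {r : V → V → Prop} (β : ℕ → List V) (hne : ∀ k, β k ≠ [])
    (hβ : ∀ k, (β k).IsChain r) (hlink : ∀ k, (β k).getLast? = (β (k + 1)).head?)
    (hfin : ∀ v, {k | v ∈ β k}.Finite) :
    ∃ R, IsRay r R ∧ ∃ b : ℕ → ℕ, Tendsto b atTop atTop ∧ ∀ i, R i ∈ β (b i) := by
  obtain ⟨w, b, hw, hb, hwb⟩ := exists_walk_of_blocks β hne hβ hlink
  have hw_fin : ∀ v, {n | w n = v}.Finite := fun v => by
    have hev := (hfin v).eventually_cofinite_notMem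
    rw [Nat.cofinite_eq_atTop] at hev
    obtain ⟨N, hN⟩ := eventually_atTop.1 (hb.eventually hev)
    exact (finite_Iio N).subset fun n hn => not_le.1 fun h => hN n h (hn ▸ hwb n)
  obtain ⟨m, hm, hray⟩ := exists_strictMono_isRay_comp hw hw_fin
  exact ⟨w ∘ m, hray, b ∘ m, hb.comp hm.tendsto_atTop, fun i => hwb (m i)⟩

variable {D : V → V → Prop} {R : ℕ → V}

theorem Solid.exists_backward_walks (hR : Solid D R) :
    ∃ (c : ℕ → ℕ) (ψ : ℕ → List V), (∀ k, (ψ k).IsChain D) ∧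
      (∀ k, (ψ k).head? = some (R (c (k + 1)))) ∧ (∀ k, (ψ k).getLast? = some (R (c k))) ∧
      ∀ j k, j + 2 ≤ k → ∀ x ∈ ψ j, x ∉ ψ k := by
  classical
  have hcomp : ∀ X : Finset V, ∃ C, IsSCCIn D (↑X)ᶜ C ∧ ∃ n, ∀ m, n ≤ m → R m ∈ C := hR.2
  choose C hC n hn using hcomp
  have step : ∀ (c : ℕ) (Y Z : Finset V), n Y ≤ c → ∃ ψ : List V, ψ.IsChain D ∧
      ψ.head? = some (R (max (n Y) (n Z))) ∧ ψ.getLast? = some (R c) ∧ ∀ x ∈ ψ, x ∉ Y :=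
    fun c Y Z hc => by
      obtain ⟨ψ, hψ, hh, hl, hS⟩ :=
        ((hC Y).reachIn (hn Y _ (le_max_left _ _)) (hn Y c hc)).exists_isPathList
      exact ⟨ψ, hψ.2.2, hh, hl, hS⟩
  choose! ψ hψ using step
  -- state `(c k, Y k, Z k)`: `Z k` holds the first `k` walks, and walk `k` avoids `Y k = Z (k - 1)`
  let st : ℕ → ℕ × Finset V × Finset V := fun k => Nat.rec (n ∅, ∅, ∅)
    (fun _ s => (max (n s.2.1) (n s.2.2), s.2.2, s.2.2 ∪ (ψ s.1 s.2.1 s.2.2).toFinset)) k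
  have hst : ∀ k, n (st k).2.1 ≤ (st k).1 := by
    rintro (_ | k)
    exacts [le_rfl, le_max_right _ _]
  have hZ : ∀ j k, j < k → ∀ x ∈ ψ (st j).1 (st j).2.1 (st j).2.2, x ∈ (st k).2.2 := by
    intro j k hjk x hx
    induction k, hjk using Nat.le_induction with
    | base => exact Finset.mem_union_right _ (List.mem_toFinset.2 hx)
    | succ k _ ih => exact Finset.mem_union_left _ ih
  refine ⟨fun k => (st k).1, fun k => ψ (st k).1 (st k).2.1 (st k).2.2,
    fun k => (hψ _ _ _ (hst k)).1, fun k => (hψ _ _ _ (hst k)).2.1,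
    fun k => (hψ _ _ _ (hst k)).2.2.1, fun j k hjk x hxj hxk => ?_⟩
  cases k with
  | zero => omega
  | succ k => exact (hψ _ _ _ (hst (k + 1))).2.2.2 x hxk (hZ j k (by omega) x hxj)

theorem Solid.exists_revRay_preEquiv (hR : Solid D R) :
    ∃ R', IsRevRay D R' ∧ PreEquiv D (true, R) (false, R') := by
  obtain ⟨c, ψ, hψ, hhead, hlast, hdisj⟩ := hR.exists_backward_walks
  have hfin : ∀ v, {k | v ∈ (ψ k).reverse}.Finite := fun v => by
    by_cases h : ∃ j, v ∈ ψ j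
    · obtain ⟨j, hj⟩ := h
      exact (finite_Iic (j + 1)).subset fun k hk =>
        mem_Iic.2 <| not_lt.1 fun hlt => hdisj j k (by omega) v hj (List.mem_reverse.1 hk)
    · simp only [not_exists] at h
      simp [h]
  have hne : ∀ k, ψ k ≠ [] := fun k => List.ne_nil_of_mem (List.mem_of_mem_head? (hhead k))
  obtain ⟨R', hR', b, hb, hR'ψ⟩ := exists_isRay_of_blocks (r := fun x y => D y x)
    (fun k => (ψ k).reverse) (fun k => by simpa using hne k)
    (fun k => List.isChain_reverse.2 (hψ k)) (fun k => by simp [hhead, hlast]) hfin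
  have hcross : ∀ X : Finset V, ∃ i k, ReachIn D (↑X)ᶜ (R (c (k + 1))) (R' i) ∧
      ReachIn D (↑X)ᶜ (R' i) (R (c k)) := fun X => by
    have hev : ∀ᶠ k in atTop, ∀ x ∈ X, x ∉ ψ k := (eventually_all_finset X).2 fun v _ => by
      simpa [Nat.cofinite_eq_atTop] using (hfin v).eventually_cofinite_notMem
    obtain ⟨i, hi⟩ := (hb.eventually hev).exists
    exact ⟨i, b i, reachIn_of_isChain_of_mem (hψ (b i)) (fun x hx hxX => hi x hxX hx)
      (hhead _) (hlast _) (List.mem_reverse.1 (hR'ψ i))⟩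
  refine ⟨R', hR', preEquiv_iff.2 ⟨fun X => ?_, fun X => ?_⟩⟩
  · obtain ⟨i, k, h, -⟩ := hcross X
    exact ⟨_, ⟨_, rfl⟩, _, ⟨i, rfl⟩, h⟩
  · obtain ⟨i, k, -, h⟩ := hcross X
    exact ⟨_, ⟨i, rfl⟩, _, ⟨_, rfl⟩, h⟩

end ReverseRay

/-- A pre-end `γ` includes an end iff it is represented both by a ray and a reverse ray;
moreover the included end is unique. -/
theorem preend_includes_end_iff (D : V → V → Prop) (Q₀ : Bool × (ℕ → V))
    (hQ₀ : IsGenRay D Q₀) (γ : Set (Bool × (ℕ → V)))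
    (hγ : γ = {Q | IsGenRay D Q ∧ PreEquiv D Q₀ Q}) :
    ((∃ R, IncludesEnd D γ R) ↔ ((∃ R, (true, R) ∈ γ) ∧ ∃ R, (false, R) ∈ γ)) ∧
    (∀ R R', IncludesEnd D γ R → IncludesEnd D γ R' → EndEquiv D R R') := by
  subst hγ
  have hmem : ∀ {R}, IncludesEnd D {Q | IsGenRay D Q ∧ PreEquiv D Q₀ Q} R →
      PreEquiv D Q₀ (true, R) := fun hR => (hR.2 _ hR.1 hR.1.endEquiv_refl).2
  refine ⟨⟨fun ⟨R, hR⟩ => ?_, fun ⟨⟨R, hR, hQR⟩, ⟨R', hR', hQR'⟩⟩ => ?_⟩, fun R R' hR hR' => ?_⟩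
  · obtain ⟨R', hR', hRR'⟩ := hR.1.exists_revRay_preEquiv
    exact ⟨⟨R, hR.1.1, hmem hR⟩, ⟨R', hR', (hmem hR).trans hR.1.1 hRR'⟩⟩
  · have hSol : Solid D R := IsRay.solid_of_preEquiv hR hR' (hQR.symm.trans hQ₀ hQR')
    exact ⟨R, hSol, fun R₂ hR₂ hRR₂ => ⟨hR₂.1, hQR.trans hR hRR₂.preEquiv⟩⟩
  · exact hR.1.endEquiv_of_preEquiv hR'.1 ((hmem hR).symm.trans hQ₀ (hmem hR'))
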